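/- Let n₁, n₂, n₃, n₄ ∈ ℝ³ be such that every three of them are linearly independent. Then (span{n₁, n₂})ᗮ + (span{n₂, n₃})ᗮ + (span{n₃, n₄})ᗮ = ℝ³, where ᗮ denotes orthogonal complement and + denotes sum of subspaces. -/
import Mathlib

open scoped RealInnerProductSpace
open Matrix

noncomputable section

/-- ℝ³ with its standard inner product. -/
abbrev V3 := EuclideanSpace ℝ (Fin 3)

/-- The affine target plane V = {x ∈ ℝ³ : ⟨n, x − p₀⟩ = 0}. -/
def plane (n p0 : V3) : Set V3 := {x | ⟪n, x - p0⟫ = 0}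

/-- The ring plane P = {x ∈ ℝ³ : x₃ = 0}. -/
def ringPlane : Set V3 := {x | x 2 = 0}

/-- SO(3): real 3×3 matrices with RᵀR = I and det R = 1. -/
def SO3 (R : Matrix (Fin 3) (Fin 3) ℝ) : Prop := Rᵀ * R = 1 ∧ R.det = 1

/-- The action of the Sim(3) element (s, R, v) on ℝ³: x ↦ sRx + v. -/
def act (s : ℝ) (R : Matrix (Fin 3) (Fin 3) ℝ) (v : V3) (x : V3) : V3 :=
  s • (Matrix.toEuclideanLin R x) + v

/-- The third standard basis vector e₃. -/
def e₃ : V3 := EuclideanSpace.single 2 1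

lemma triple_indep {a b c : V3} (h : LinearIndependent ℝ ![a, b, c])
    {x y z : ℝ} (hx : x • a + y • b + z • c = 0) : x = 0 ∧ y = 0 ∧ z = 0 := by
  have := Fintype.linearIndependent_iff.mp h ![x, y, z] (by
    simp [Fin.sum_univ_three, hx])
  exact ⟨this 0, this 1, this 2⟩

/-- if every three of n₁, n₂, n₃, n₄ are linearly independent, then
(span{n₁,n₂})ᗮ + (span{n₂,n₃})ᗮ + (span{n₃,n₄})ᗮ = ℝ³. -/
theorem stmt_13 (n₁ n₂ n₃ n₄ : V3)
    (h123 : LinearIndependent ℝ ![n₁, n₂, n₃])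
    (h124 : LinearIndependent ℝ ![n₁, n₂, n₄])
    (h134 : LinearIndependent ℝ ![n₁, n₃, n₄])
    (h234 : LinearIndependent ℝ ![n₂, n₃, n₄]) :
    (Submodule.span ℝ {n₁, n₂})ᗮ ⊔ (Submodule.span ℝ {n₂, n₃})ᗮ ⊔
      (Submodule.span ℝ {n₃, n₄})ᗮ = ⊤ := by
  rw [← Submodule.orthogonal_eq_bot_iff]
  rw [← Submodule.inf_orthogonal, ← Submodule.inf_orthogonal,
    Submodule.orthogonal_orthogonal, Submodule.orthogonal_orthogonal,
    Submodule.orthogonal_orthogonal]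
  rw [Submodule.eq_bot_iff]
  rintro x ⟨⟨hx12, hx23⟩, hx34⟩
  obtain ⟨a, b, hab⟩ := Submodule.mem_span_pair.mp hx12
  obtain ⟨c, d, hcd⟩ := Submodule.mem_span_pair.mp hx23
  obtain ⟨e, f, hef⟩ := Submodule.mem_span_pair.mp hx34
  -- a n₁ + (b - c) n₂ + (-d) n₃ = 0
  have h1 : a • n₁ + (b - c) • n₂ + (-d) • n₃ = 0 := by
    rw [sub_smul, neg_smul]
    rw [← hab] at hcd
    abel_nf
    linear_combination (norm := module) -hcd
  obtain ⟨ha, hbc, hd⟩ := triple_indep h123 h1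
  -- so x = b • n₂, and b n₂ - e n₃ - f n₄ = 0
  have hb : b = c := by linarith [sub_eq_zero.mp (by linarith : b - c = 0)]
  have hx : x = b • n₂ := by
    rw [← hcd, hb, neg_eq_zero.mp hd]; simp
  have h2 : b • n₂ + (-e) • n₃ + (-f) • n₄ = 0 := by
    rw [neg_smul, neg_smul]
    rw [hx] at hef
    linear_combination (norm := module) -hef
  obtain ⟨hb0, _, _⟩ := triple_indep h234 h2
  rw [hx, hb0, zero_smul]
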